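/- Let d ≥ 2 and r > d/2. Let D be a noisy data set with y_i = f*(x_i) + ε_i, ε_i independent, E[ε_i] = 0, |ε_i| ≤ M, whose sampling points are τ-quasi uniform (τ ≥ 2), and f* ∈ W₂^r(S^d). For any n ≤ s (with s the degree of exactness of the quadrature rule with weights 0 ≤ w_{i,s,D} ≤ c₂|D|^{−1}), the filtered hyperinterpolation satisfies E{‖f⋄_{D,n} − f*‖²_{L2(S^d)}} ≤ c₅² n^{−2r} ‖f*‖²_{W₂^r(S^d)} + c₁ c₂² M² n^d / |D|, provided the quadrature rule is exact for polynomials of degree up to 3n − 1, where c₅ is the constant from the filtered hyperinterpolation approximation theorem and c₁ is the constant from the L2-norm bound of the filtered kernel. -/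

import Mathlib

open MeasureTheory ProbabilityTheory Real Filter
open scoped BigOperators ENNReal RealInnerProductSpace

noncomputable section

/-- The unit sphere `S^d ⊂ ℝ^{d+1}`. -/
abbrev UnitSphere (d : ℕ) : Type := Metric.sphere (0 : EuclideanSpace ℝ (Fin (d + 1))) 1

/-- Euclidean inner product of two points on the sphere. -/
def sdot {d : ℕ} (x y : UnitSphere d) : ℝ :=
  ⟪(x : EuclideanSpace ℝ (Fin (d + 1))), (y : EuclideanSpace ℝ (Fin (d + 1)))⟫

/-- Geodesic distance on the sphere. -/
def geoDist {d : ℕ} (x y : UnitSphere d) : ℝ := Real.arccos (sdot x y)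

/-- Surface (Lebesgue) measure on `S^d`: the `d`-dimensional Hausdorff measure. -/
def sphereMeasure (d : ℕ) : Measure (UnitSphere d) := μH[d]

/-- Spherical polynomials of degree at most `n`: restrictions to the sphere of
polynomials on `ℝ^{d+1}` of total degree at most `n`. -/
def sphPoly (d n : ℕ) : Set (UnitSphere d → ℝ) :=
  {f | ∃ p : MvPolynomial (Fin (d + 1)) ℝ, p.totalDegree ≤ n ∧
    ∀ x : UnitSphere d, f x = MvPolynomial.eval (fun i => (x : EuclideanSpace ℝ (Fin (d + 1))) i) p}

/-- The space of spherical harmonics of degree `ℓ`: restrictions to the sphere of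
homogeneous harmonic polynomials of degree `ℓ` on `ℝ^{d+1}`. -/
def sphHarmonic (d ℓ : ℕ) : Set (UnitSphere d → ℝ) :=
  {f | ∃ p : MvPolynomial (Fin (d + 1)) ℝ, p.IsHomogeneous ℓ ∧
    (∑ i : Fin (d + 1), MvPolynomial.pderiv i (MvPolynomial.pderiv i p)) = 0 ∧
    ∀ x : UnitSphere d, f x = MvPolynomial.eval (fun i => (x : EuclideanSpace ℝ (Fin (d + 1))) i) p}

/-- A filter of smoothness `κ`: `η ∈ C^κ(ℝ₊)`, `supp η ⊆ [1/2,2]`, and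
`η(t)² + η(2t)² = 1` on `[1/2,1]`. -/
structure IsFilter (η : ℝ → ℝ) (κ : ℕ) : Prop where
  smooth : ContDiffOn ℝ κ η (Set.Ici 0)
  supp : ∀ t : ℝ, 0 ≤ t → t ∉ Set.Icc (1/2 : ℝ) 2 → η t = 0
  partition : ∀ t ∈ Set.Icc (1/2 : ℝ) 1, (η t) ^ 2 + (η (2 * t)) ^ 2 = 1

/-- Gegenbauer polynomials `C_ℓ^λ` via the three-term recurrence. -/
def gegenbauer (lam : ℝ) : ℕ → Polynomial ℝ
  | 0 => 1
  | 1 => Polynomial.C (2 * lam) * Polynomial.X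
  | (n + 2) =>
      Polynomial.C (2 * ((n : ℝ) + 1 + lam) / ((n : ℝ) + 2)) * Polynomial.X *
          gegenbauer lam (n + 1) -
        Polynomial.C (((n : ℝ) + 2 * lam) / ((n : ℝ) + 2)) * gegenbauer lam n

/-- The normalized Gegenbauer polynomial `P_ℓ^{(d+1)}` with `P_ℓ^{(d+1)}(1) = 1`. -/
def normGegenbauer (d ℓ : ℕ) (t : ℝ) : ℝ :=
  (gegenbauer (((d : ℝ) - 1) / 2) ℓ).eval t / (gegenbauer (((d : ℝ) - 1) / 2) ℓ).eval 1

/-- `Z_{d,ℓ}`, the dimension of the space of spherical harmonics of degree `ℓ` on `S^d`. -/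
def harmDim (d ℓ : ℕ) : ℝ :=
  if ℓ = 0 then 1
  else (2 * (ℓ : ℝ) + d - 1) / ((ℓ : ℝ) + d - 1) * (Nat.choose (ℓ + d - 1) ℓ : ℝ)

/-- The volume `|S^d| = 2 π^{(d+1)/2} / Γ((d+1)/2)`. -/
def sphereVol (d : ℕ) : ℝ :=
  2 * Real.pi ^ (((d : ℝ) + 1) / 2) / Real.Gamma (((d : ℝ) + 1) / 2)

/-- The filtered kernel `K_n(t) = Σ_ℓ η(ℓ/n) (Z_{d,ℓ}/|S^d|) P_ℓ^{(d+1)}(t)`. -/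
def filteredKernel (d : ℕ) (η : ℝ → ℝ) (n : ℕ) (t : ℝ) : ℝ :=
  ∑' ℓ : ℕ, η ((ℓ : ℝ) / (n : ℝ)) * (harmDim d ℓ / sphereVol d) * normGegenbauer d ℓ t

/-- Mesh norm (covering radius) of a finite point configuration on the sphere. -/
def meshNorm {d : ℕ} {ι : Type*} [Fintype ι] (x : ι → UnitSphere d) : ℝ :=
  ⨆ y : UnitSphere d, ⨅ i : ι, geoDist y (x i)

/-- Separation radius of a finite point configuration on the sphere. -/
def sepRadius {d : ℕ} {ι : Type*} [Fintype ι] (x : ι → UnitSphere d) : ℝ :=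
  (1 / 2) * ⨅ p : {q : ι × ι // q.1 ≠ q.2}, geoDist (x p.val.1) (x p.val.2)

/-- Mesh ratio `ρ = h/δ ≥ 1`. -/
def meshRatio {d : ℕ} {ι : Type*} [Fintype ι] (x : ι → UnitSphere d) : ℝ :=
  meshNorm x / sepRadius x

/-- `g` is a spherical-harmonic decomposition of `f` witnessing membership of the
Sobolev space `W₂^r(S^d)`. -/
structure SobolevData (d : ℕ) (r : ℝ) (f : UnitSphere d → ℝ) (g : ℕ → UnitSphere d → ℝ) :
    Prop where
  harmonic : ∀ ℓ, g ℓ ∈ sphHarmonic d ℓ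
  hasSum : ∀ x, HasSum (fun ℓ => g ℓ x) (f x)
  summable : Summable (fun ℓ : ℕ =>
    (1 + (ℓ : ℝ) * ((ℓ : ℝ) + d - 1)) ^ r * ∫ x, (g ℓ x) ^ 2 ∂(sphereMeasure d))

/-- The squared Sobolev norm `‖f‖²_{W₂^r}` computed from a harmonic decomposition `g`. -/
def sobNormSq (d : ℕ) (r : ℝ) (g : ℕ → UnitSphere d → ℝ) : ℝ :=
  ∑' ℓ : ℕ, (1 + (ℓ : ℝ) * ((ℓ : ℝ) + d - 1)) ^ r * ∫ x, (g ℓ x) ^ 2 ∂(sphereMeasure d)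

end

/-!
Write the estimator error as `u + ∑ i, ε i · K i`, where `u` is the error of filtered
hyperinterpolation of the noise-free data and `K i = w i · K_n(x_i · ·)`. Expanding the square,
the cross terms have expectation zero because the noise is centred and independent, so the
expected squared `L²` error is `‖u‖² + ∑ i, E[ε_i²] ‖K i‖²`: the first term is the approximation
error controlled by `c₅`, the second is at most `N · M² (c₂/N)² c₁ n^d`. If `u ∉ L²`, every inner
integral is the junk value `0`.

The surface measure is finite because the inverse stereographic projections are locally Lipschitz,
hence carry the finite `d`-dimensional Hausdorff measure of small balls in `ℝ^d` to neighbourhoods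
covering the compact sphere.
-/

open Metric Module

section HausdorffMeasureSphere

variable {E : Type*} [NormedAddCommGroup E] [InnerProductSpace ℝ E] [MeasurableSpace E]
  [BorelSpace E]

theorem isLocallyFiniteMeasure_hausdorffMeasure_sphere (n : ℕ) [Fact (finrank ℝ E = n + 1)] :
    IsLocallyFiniteMeasure (μH[n] : Measure (sphere (0 : E) 1)) := by
  have : FiniteDimensional ℝ E := .of_fact_finrank_eq_succ n
  refine ⟨fun p => ?_⟩
  set v : E := -(p : E)
  have hv : ‖v‖ = 1 := by simp [v]
  obtain ⟨K, t, ht, hK⟩ := ((contDiff_stereoInvFunAux (v := v) (m := 1)).comp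
    (Submodule.subtypeL _).contDiff).contDiffAt.exists_lipschitzOnWith (x := 0)
  obtain ⟨δ, hδ, hball⟩ := Metric.mem_nhds_iff.mp ht
  refine ⟨stereoInvFun hv '' ball 0 δ, ?_, ?_⟩
  · have hp : stereoInvFun hv 0 = p := by ext; simp [stereoInvFun_apply, v]
    exact ((isOpenEmbedding_stereographic_symm hv).isOpenMap _ isOpen_ball).mem_nhds
      ⟨0, mem_ball_self hδ, hp⟩
  · have hlip : LipschitzOnWith K (stereoInvFun hv) (ball 0 δ) := hK.mono hball
    have hdim : finrank ℝ (ℝ ∙ v)ᗮ = n := Submodule.finrank_orthogonal_span_singleton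
      (by simpa [v] using ne_zero_of_mem_unit_sphere p)
    have hball_fin : μH[finrank ℝ (ℝ ∙ v)ᗮ] (ball (0 : (ℝ ∙ v)ᗮ) δ) < ⊤ := measure_ball_lt_top
    rw [hdim] at hball_fin
    exact (hlip.hausdorffMeasure_image_le (Nat.cast_nonneg n)).trans_lt
      (ENNReal.mul_lt_top (by simp) hball_fin)

end HausdorffMeasureSphere

section SquareExpansion

variable {X Ω ι : Type*} [MeasurableSpace X] {μ : Measure X} [Fintype ι]

theorem Continuous.memLp_of_compactSpace [TopologicalSpace X] [CompactSpace X]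
    [OpensMeasurableSpace X] [IsFiniteMeasure μ] {f : X → ℝ} (hf : Continuous f)
    (p : ENNReal) : MemLp f p μ := by
  obtain ⟨C, hC⟩ := isCompact_univ.exists_bound_of_continuousOn hf.continuousOn
  exact MemLp.of_bound hf.aestronglyMeasurable C (ae_of_all _ fun y => hC y trivial)

theorem integral_sq_add_sum_mul {u : X → ℝ} {K : ι → X → ℝ} (hu : MemLp u 2 μ)
    (hK : ∀ i, MemLp (K i) 2 μ) (c : ι → ℝ) :
    ∫ y, (u y + ∑ i, c i * K i y) ^ 2 ∂μ =
      ∫ y, u y ^ 2 ∂μ + ∑ i, c i * (2 * ∫ y, u y * K i y ∂μ) +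
        ∑ i, ∑ j, c i * c j * ∫ y, K i y * K j y ∂μ := by
  have hexpand : ∀ y, (u y + ∑ i, c i * K i y) ^ 2 =
      u y ^ 2 + ∑ i, c i * (2 * (u y * K i y)) + ∑ i, ∑ j, c i * c j * (K i y * K j y) := by
    intro y
    rw [add_sq, sq (∑ i, c i * K i y), Finset.sum_mul_sum, Finset.mul_sum]
    refine congrArg₂ (· + ·) (congrArg₂ (· + ·) rfl ?_) ?_
    · exact Finset.sum_congr rfl fun i _ => by ring
    · exact Finset.sum_congr rfl fun i _ => Finset.sum_congr rfl fun j _ => by ring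
  have hlin : ∀ i, Integrable (fun y => c i * (2 * (u y * K i y))) μ := fun i =>
    ((hu.integrable_mul (hK i)).const_mul 2).const_mul (c i)
  have hquad : ∀ i j, Integrable (fun y => c i * c j * (K i y * K j y)) μ := fun i j =>
    ((hK i).integrable_mul (hK j)).const_mul _
  have hquadsum : ∀ i, Integrable (fun y => ∑ j, c i * c j * (K i y * K j y)) μ := fun i =>
    integrable_finsetSum _ fun j _ => hquad i j
  have hsq_lin : Integrable (fun y => u y ^ 2 + ∑ i, c i * (2 * (u y * K i y))) μ :=
    hu.integrable_sq.add (integrable_finsetSum _ fun i _ => hlin i)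
  simp_rw [hexpand]
  rw [integral_add hsq_lin (integrable_finsetSum _ fun i _ => hquadsum i),
    integral_add hu.integrable_sq (integrable_finsetSum _ fun i _ => hlin i),
    integral_finsetSum _ fun i _ => hlin i, integral_finsetSum _ fun i _ => hquadsum i]
  simp only [integral_const_mul]
  congr 1
  exact Finset.sum_congr rfl fun i _ => by
    rw [integral_finsetSum _ fun j _ => hquad i j]; simp only [integral_const_mul]

theorem integral_sq_add_eq_zero_of_not_memLp {u V : X → ℝ} (hu : AEStronglyMeasurable u μ)
    (hu2 : ¬MemLp u 2 μ) (hV : MemLp V 2 μ) : ∫ y, (u y + V y) ^ 2 ∂μ = 0 := by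
  refine integral_undef fun h => hu2 ?_
  have huV : MemLp (u + V) 2 μ := (memLp_two_iff_integrable_sq (hu.add hV.1)).mpr h
  simpa using huV.sub hV

variable {mΩ : MeasurableSpace Ω} {P : Measure Ω} {ε : ι → Ω → ℝ}

theorem integral_sum_sum_mul_mul_of_iIndepFun
    (hε : ∀ i, MemLp (ε i) 2 P) (hind : iIndepFun ε P) (hmean : ∀ i, ∫ ω, ε i ω ∂P = 0)
    (G : ι → ι → ℝ) :
    ∫ ω, ∑ i, ∑ j, ε i ω * ε j ω * G i j ∂P = ∑ i, (∫ ω, ε i ω ^ 2 ∂P) * G i i := by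
  classical
  have hcov : ∀ i j, ∫ ω, ε i ω * ε j ω ∂P = if i = j then ∫ ω, ε i ω ^ 2 ∂P else 0 := by
    intro i j
    split_ifs with hij
    · subst hij; simp only [sq]
    · rw [(hind.indepFun hij).integral_fun_mul_eq_mul_integral (hε i).1 (hε j).1]
      simp [hmean]
  have hterm : ∀ i j, Integrable (fun ω => ε i ω * ε j ω * G i j) P := fun i j =>
    ((hε i).integrable_mul (hε j)).mul_const _
  rw [integral_finsetSum _ fun i _ => integrable_finsetSum _ fun j _ => hterm i j]
  refine Finset.sum_congr rfl fun i _ => ?_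
  rw [integral_finsetSum _ fun j _ => hterm i j]
  simp only [integral_mul_const, hcov, ite_mul, zero_mul, Finset.sum_ite_eq, Finset.mem_univ,
    if_true]

theorem integral_integral_sq_add_sum_mul_of_iIndepFun [IsProbabilityMeasure P] {u : X → ℝ}
    {K : ι → X → ℝ} (hu : MemLp u 2 μ) (hK : ∀ i, MemLp (K i) 2 μ)
    (hε : ∀ i, MemLp (ε i) 2 P) (hind : iIndepFun ε P) (hmean : ∀ i, ∫ ω, ε i ω ∂P = 0) :
    ∫ ω, ∫ y, (u y + ∑ i, ε i ω * K i y) ^ 2 ∂μ ∂P =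
      ∫ y, u y ^ 2 ∂μ + ∑ i, (∫ ω, ε i ω ^ 2 ∂P) * ∫ y, K i y ^ 2 ∂μ := by
  have hlin : Integrable (fun ω => ∑ i, ε i ω * (2 * ∫ y, u y * K i y ∂μ)) P :=
    integrable_finsetSum _ fun i _ => ((hε i).integrable one_le_two).mul_const _
  have hquad : Integrable (fun ω => ∑ i, ∑ j, ε i ω * ε j ω * ∫ y, K i y * K j y ∂μ) P :=
    integrable_finsetSum _ fun i _ => integrable_finsetSum _ fun j _ =>
      ((hε i).integrable_mul (hε j)).mul_const _
  have hconst_lin : Integrable (fun ω => ∫ y, u y ^ 2 ∂μ +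
      ∑ i, ε i ω * (2 * ∫ y, u y * K i y ∂μ)) P := (integrable_const _).add hlin
  simp_rw [integral_sq_add_sum_mul hu hK]
  rw [integral_add hconst_lin hquad, integral_add (integrable_const _) hlin,
    integral_finsetSum _ fun i _ => ((hε i).integrable one_le_two).mul_const _,
    integral_sum_sum_mul_mul_of_iIndepFun hε hind hmean]
  simp [integral_mul_const, hmean, sq]

theorem integral_integral_sq_add_sum_mul_le_of_iIndepFun [IsProbabilityMeasure P]
    {u : X → ℝ} {K : ι → X → ℝ} (hu : AEStronglyMeasurable u μ) (hK : ∀ i, MemLp (K i) 2 μ)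
    (hε : ∀ i, MemLp (ε i) 2 P) (hind : iIndepFun ε P) (hmean : ∀ i, ∫ ω, ε i ω ∂P = 0) :
    ∫ ω, ∫ y, (u y + ∑ i, ε i ω * K i y) ^ 2 ∂μ ∂P ≤
      ∫ y, u y ^ 2 ∂μ + ∑ i, (∫ ω, ε i ω ^ 2 ∂P) * ∫ y, K i y ^ 2 ∂μ := by
  by_cases hu2 : MemLp u 2 μ
  · exact (integral_integral_sq_add_sum_mul_of_iIndepFun hu2 hK hε hind hmean).le
  · have hnoise : ∀ ω, MemLp (fun y => ∑ i, ε i ω * K i y) 2 μ := fun ω =>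
      memLp_finsetSum _ fun i _ => (hK i).const_mul (ε i ω)
    simp_rw [integral_sq_add_eq_zero_of_not_memLp hu hu2 (hnoise _), integral_zero]
    exact add_nonneg (integral_nonneg fun _ => sq_nonneg _) (Finset.sum_nonneg fun i _ =>
      mul_nonneg (integral_nonneg fun _ => sq_nonneg _) (integral_nonneg fun _ => sq_nonneg _))

theorem sum_integral_sq_mul_integral_sq_le [IsProbabilityMeasure P] {N : ℕ}
    {ε : Fin N → Ω → ℝ} {k : Fin N → X → ℝ} {w : Fin N → ℝ} {M B c : ℝ}
    (hε : ∀ i ω, |ε i ω| ≤ M) (hk : ∀ i, ∫ y, k i y ^ 2 ∂μ ≤ B)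
    (hw : ∀ i, 0 ≤ w i ∧ w i ≤ c / N) :
    ∑ i, (∫ ω, ε i ω ^ 2 ∂P) * ∫ y, (w i * k i y) ^ 2 ∂μ ≤ B * c ^ 2 * M ^ 2 / N := by
  have hεsq : ∀ i, ∫ ω, ε i ω ^ 2 ∂P ≤ M ^ 2 := fun i => by
    simpa using integral_mono_of_nonneg (ae_of_all _ fun ω => sq_nonneg (ε i ω))
      (integrable_const (μ := P) (M ^ 2))
      (ae_of_all _ fun ω => sq_le_sq.mpr ((hε i ω).trans (le_abs_self M)))
  have hwk : ∀ i, ∫ y, (w i * k i y) ^ 2 ∂μ ≤ (c / N) ^ 2 * B := fun i => by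
    simp_rw [mul_pow, integral_const_mul]
    exact mul_le_mul (pow_le_pow_left₀ (hw i).1 (hw i).2 2) (hk i)
      (integral_nonneg fun _ => sq_nonneg _) (sq_nonneg _)
  calc ∑ i, (∫ ω, ε i ω ^ 2 ∂P) * ∫ y, (w i * k i y) ^ 2 ∂μ
      ≤ ∑ _i : Fin N, M ^ 2 * ((c / N) ^ 2 * B) :=
        Finset.sum_le_sum fun i _ => mul_le_mul (hεsq i) (hwk i)
          (integral_nonneg fun _ => sq_nonneg _) (sq_nonneg _)
    _ = B * c ^ 2 * M ^ 2 / N := by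
        rcases eq_or_ne (N : ℝ) 0 with hN | hN
        · simp [hN]
        · simp only [Finset.sum_const, Finset.card_univ, Fintype.card_fin, nsmul_eq_mul]
          field_simp

end SquareExpansion

section Sphere

variable {d : ℕ}

instance : Fact (finrank ℝ (EuclideanSpace ℝ (Fin (d + 1))) = d + 1) := ⟨by simp⟩

instance : CompactSpace (UnitSphere d) := isCompact_iff_compactSpace.mp (isCompact_sphere 0 1)

instance : IsFiniteMeasure (sphereMeasure d) := by
  have := isLocallyFiniteMeasure_hausdorffMeasure_sphere (E := EuclideanSpace ℝ (Fin (d + 1))) d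
  unfold sphereMeasure
  infer_instance

theorem filteredKernel_eq_sum {η : ℝ → ℝ} {κ : ℕ} (hη : IsFilter η κ) {n : ℕ} (hn : 0 < n)
    (t : ℝ) :
    filteredKernel d η n t = ∑ ℓ ∈ Finset.range (2 * n + 1),
      η (ℓ / n) * (harmDim d ℓ / sphereVol d) * normGegenbauer d ℓ t := by
  refine tsum_eq_sum fun ℓ hℓ => ?_
  have hlarge : 2 < (ℓ : ℝ) / n := by
    rw [lt_div_iff₀ (by exact_mod_cast hn)]
    exact_mod_cast (by simpa using hℓ : 2 * n + 1 ≤ ℓ)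
  rw [hη.supp _ (by positivity) fun h => hlarge.not_ge h.2, zero_mul, zero_mul]

theorem continuous_filteredKernel {η : ℝ → ℝ} {κ : ℕ} (hη : IsFilter η κ) {n : ℕ} (hn : 0 < n) :
    Continuous (filteredKernel d η n) := by
  rw [funext (filteredKernel_eq_sum hη hn)]
  unfold normGegenbauer
  fun_prop

theorem continuous_filteredKernel_sdot {η : ℝ → ℝ} {κ : ℕ} (hη : IsFilter η κ) {n : ℕ}
    (hn : 0 < n) (x : UnitSphere d) : Continuous fun y => filteredKernel d η n (sdot x y) :=
  (continuous_filteredKernel hη hn).comp (continuous_const.inner continuous_subtype_val)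

theorem continuous_of_mem_sphHarmonic {ℓ : ℕ} {f : UnitSphere d → ℝ} (hf : f ∈ sphHarmonic d ℓ) :
    Continuous f := by
  obtain ⟨p, -, -, hfp⟩ := hf
  rw [funext hfp]
  exact (MvPolynomial.continuous_eval p).comp
    (continuous_pi fun i => (continuous_apply i).comp
      ((PiLp.continuous_ofLp 2 _).comp continuous_subtype_val))

theorem SobolevData.measurable {r : ℝ} {f : UnitSphere d → ℝ} {g : ℕ → UnitSphere d → ℝ}
    (hf : SobolevData d r f g) : Measurable f :=
  measurable_of_tendsto_metrizable
    (fun _ => Finset.measurable_sum _ fun ℓ _ =>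
      (continuous_of_mem_sphHarmonic (hf.harmonic ℓ)).measurable)
    (tendsto_pi_nhds.mpr fun y => (hf.hasSum y).tendsto_sum_nat)

end Sphere

theorem stmt_11_general (d : ℕ) (r : ℝ)
    (κ : ℕ) (η : ℝ → ℝ) (hη : IsFilter η κ)
    (M : ℝ)
    -- `c₅`: constant of the filtered hyperinterpolation approximation theorem (Lemma 2.4)
    (c₅ : ℝ)
    (hc₅ : ∀ (n' N' : ℕ), 1 ≤ n' → ∀ (w' : Fin N' → ℝ) (x' : Fin N' → UnitSphere d),
      (∀ P ∈ sphPoly d (3 * n' - 1),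
        ∫ y, P y ∂(sphereMeasure d) = ∑ i, w' i * P (x' i)) →
      ∀ (f : UnitSphere d → ℝ) (g : ℕ → UnitSphere d → ℝ), SobolevData d r f g →
        ∫ y, (f y - ∑ i, w' i * f (x' i) * filteredKernel d η n' (sdot (x' i) y)) ^ 2
            ∂(sphereMeasure d) ≤
          c₅ ^ 2 * (n' : ℝ) ^ (-(2 * r)) * sobNormSq d r g)
    -- `c₁`: constant of the `L2`-norm bound of the filtered kernel
    (c₁ : ℝ)
    (hc₁ : ∀ (n' : ℕ), 1 ≤ n' → ∀ x' : UnitSphere d,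
      ∫ y, (filteredKernel d η n' (sdot x' y)) ^ 2 ∂(sphereMeasure d) ≤
        c₁ * (n' : ℝ) ^ (d : ℕ))
    (n : ℕ) (hn : 1 ≤ n)
    (N : ℕ) (x : Fin N → UnitSphere d)
    (c₂ : ℝ) (w : Fin N → ℝ)
    (hw : ∀ i, 0 ≤ w i ∧ w i ≤ c₂ / (N : ℝ))
    (hexact : ∀ P ∈ sphPoly d (3 * n - 1),
      ∫ y, P y ∂(sphereMeasure d) = ∑ i, w i * P (x i))
    (fstar : UnitSphere d → ℝ) (g : ℕ → UnitSphere d → ℝ) (hfstar : SobolevData d r fstar g)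
    (Ω : Type) (mΩ : MeasureSpace Ω) (hprob : IsProbabilityMeasure (ℙ : Measure Ω))
    (ε : Fin N → Ω → ℝ) (hεmeas : ∀ i, Measurable (ε i))
    (hεindep : ProbabilityTheory.iIndepFun ε ℙ)
    (hεmean : ∀ i, ∫ ω, ε i ω ∂ℙ = 0)
    (hεbdd : ∀ i ω, |ε i ω| ≤ M) :
    ∫ ω, (∫ y,
        ((∑ i, w i * (fstar (x i) + ε i ω) * filteredKernel d η n (sdot (x i) y)) - fstar y) ^ 2
        ∂(sphereMeasure d)) ∂ℙ ≤
      c₅ ^ 2 * (n : ℝ) ^ (-(2 * r)) * sobNormSq d r g +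
        c₁ * c₂ ^ 2 * M ^ 2 * (n : ℝ) ^ (d : ℕ) / (N : ℝ) := by
  set K : Fin N → UnitSphere d → ℝ := fun i y => w i * filteredKernel d η n (sdot (x i) y)
  set u : UnitSphere d → ℝ :=
    fun y => ∑ i, w i * fstar (x i) * filteredKernel d η n (sdot (x i) y) - fstar y
  have hK : ∀ i, MemLp (K i) 2 (sphereMeasure d) := fun i =>
    (continuous_const.mul (continuous_filteredKernel_sdot hη hn (x i))).memLp_of_compactSpace 2
  have hu : AEStronglyMeasurable u (sphereMeasure d) :=
    ((continuous_finsetSum _ fun i _ => continuous_const.mul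
      (continuous_filteredKernel_sdot hη hn (x i))).measurable.sub
        hfstar.measurable).aestronglyMeasurable
  have hε : ∀ i, MemLp (ε i) 2 ℙ := fun i => MemLp.of_bound (hεmeas i).aestronglyMeasurable M
    (ae_of_all _ fun ω => (Real.norm_eq_abs _).trans_le (hεbdd i ω))
  have hsplit : ∀ ω y, (∑ i, w i * (fstar (x i) + ε i ω) * filteredKernel d η n (sdot (x i) y))
      - fstar y = u y + ∑ i, ε i ω * K i y := fun ω y => by
    have hterm : ∀ i, w i * (fstar (x i) + ε i ω) * filteredKernel d η n (sdot (x i) y) =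
        w i * fstar (x i) * filteredKernel d η n (sdot (x i) y) + ε i ω * K i y := fun i => by
      ring
    simp only [u, hterm, Finset.sum_add_distrib]
    ring
  simp_rw [hsplit]
  refine (integral_integral_sq_add_sum_mul_le_of_iIndepFun hu hK hε hεindep hεmean).trans
    (add_le_add ?_ ?_)
  · calc ∫ y, u y ^ 2 ∂sphereMeasure d = ∫ y, (fstar y -
          ∑ i, w i * fstar (x i) * filteredKernel d η n (sdot (x i) y)) ^ 2 ∂sphereMeasure d := by
          congr 1; funext y; ring
      _ ≤ _ := hc₅ n N hn w x hexact fstar g hfstar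
  · exact (sum_integral_sq_mul_integral_sq_le hεbdd (fun i => hc₁ n hn (x i)) hw).trans_eq
      (by ring)

/-- Bias–variance bound (3.6): under a quadrature rule with `0 ≤ w_i ≤ c₂|D|⁻¹` exact for
degree `3n-1`, with `c₅` the constant of the filtered hyperinterpolation approximation
theorem and `c₁` that of the `L2`-bound of the kernel,
`E‖f⋄_{D,n} - f*‖² ≤ c₅² n^{-2r} ‖f*‖²_{W₂^r} + c₁ c₂² M² n^d / |D|`. -/
theorem stmt_11 (d : ℕ) (hd : 2 ≤ d) (r : ℝ) (hr : (d : ℝ) / 2 < r)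
    (τ : ℝ) (hτ : 2 ≤ τ)
    (κ : ℕ) (hκ : (d + 3) / 2 ≤ κ) (η : ℝ → ℝ) (hη : IsFilter η κ)
    (M : ℝ) (hM : 0 ≤ M)
    -- `c₅`: constant of the filtered hyperinterpolation approximation theorem (Lemma 2.4)
    (c₅ : ℝ) (hc₅pos : 0 < c₅)
    (hc₅ : ∀ (n' N' : ℕ), 1 ≤ n' → ∀ (w' : Fin N' → ℝ) (x' : Fin N' → UnitSphere d),
      (∀ P ∈ sphPoly d (3 * n' - 1),
        ∫ y, P y ∂(sphereMeasure d) = ∑ i, w' i * P (x' i)) →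
      ∀ (f : UnitSphere d → ℝ) (g : ℕ → UnitSphere d → ℝ), SobolevData d r f g →
        ∫ y, (f y - ∑ i, w' i * f (x' i) * filteredKernel d η n' (sdot (x' i) y)) ^ 2
            ∂(sphereMeasure d) ≤
          c₅ ^ 2 * (n' : ℝ) ^ (-(2 * r)) * sobNormSq d r g)
    -- `c₁`: constant of the `L2`-norm bound of the filtered kernel
    (c₁ : ℝ) (hc₁pos : 0 < c₁)
    (hc₁ : ∀ (n' : ℕ), 1 ≤ n' → ∀ x' : UnitSphere d,
      ∫ y, (filteredKernel d η n' (sdot x' y)) ^ 2 ∂(sphereMeasure d) ≤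
        c₁ * (n' : ℝ) ^ (d : ℕ))
    (n : ℕ) (hn : 1 ≤ n)
    (N : ℕ) (hN : 2 ≤ N) (x : Fin N → UnitSphere d)
    (hxinj : Function.Injective x) (hxqu : meshRatio x ≤ τ)
    (c₂ : ℝ) (hc₂pos : 0 < c₂) (w : Fin N → ℝ)
    (hw : ∀ i, 0 ≤ w i ∧ w i ≤ c₂ / (N : ℝ))
    (hexact : ∀ P ∈ sphPoly d (3 * n - 1),
      ∫ y, P y ∂(sphereMeasure d) = ∑ i, w i * P (x i))
    (fstar : UnitSphere d → ℝ) (g : ℕ → UnitSphere d → ℝ) (hfstar : SobolevData d r fstar g)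
    (Ω : Type) (mΩ : MeasureSpace Ω) (hprob : IsProbabilityMeasure (ℙ : Measure Ω))
    (ε : Fin N → Ω → ℝ) (hεmeas : ∀ i, Measurable (ε i))
    (hεindep : ProbabilityTheory.iIndepFun ε ℙ)
    (hεmean : ∀ i, ∫ ω, ε i ω ∂ℙ = 0)
    (hεbdd : ∀ i ω, |ε i ω| ≤ M) :
    ∫ ω, (∫ y,
        ((∑ i, w i * (fstar (x i) + ε i ω) * filteredKernel d η n (sdot (x i) y)) - fstar y) ^ 2
        ∂(sphereMeasure d)) ∂ℙ ≤
      c₅ ^ 2 * (n : ℝ) ^ (-(2 * r)) * sobNormSq d r g +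
        c₁ * c₂ ^ 2 * M ^ 2 * (n : ℝ) ^ (d : ℕ) / (N : ℝ) :=
  stmt_11_general d r κ η hη M c₅ hc₅ c₁ hc₁ n hn N x c₂ w hw hexact fstar g hfstar Ω mΩ hprob ε
    hεmeas hεindep hεmean hεbdd
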